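/- Let a ∈ (0, ∞), b ∈ (0, ∞], and let t_1, t_2 ≥ 0 and C > 0. If for all positive integers n_1, n_2 and all bilinear forms U : ℓ_2^{n_1} × ℓ_2^{n_2} → 𝕂 one has ( Σ_{i=1}^{n_1} ( Σ_{j=1}^{n_2} |U(e_i, e_j)|^a )^{b/a} )^{1/b} ≤ C n_1^{t_1} n_2^{t_2} ‖U‖ (the outer sum replaced by the supremum over i when b = ∞), then t_2 ≥ 1/a − 1/2. -/

import Mathlib

open scoped ENNReal

/-- The `ℓ_p` "norm" of a finite family of (nonnegative) reals, for `p ∈ (0,∞]`: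
`(Σ_i f_i^p)^{1/p}` for finite `p`, and `sup_i f_i` when `p = ∞`. -/
noncomputable def lpNormFin (p : ℝ≥0∞) {n : ℕ} (f : Fin n → ℝ) : ℝ :=
  if p = ⊤ then ⨆ i, f i else (∑ i, f i ^ p.toReal) ^ (1 / p.toReal)

/-!
Test the hypothesis on the rank-one form `U(x, y) = x₁ · n^{-1/2} Σ_j y_j` on `ℓ_2^1 × ℓ_2^n`.
It has norm `1` and all its entries equal `n^{-1/2}`, so the left-hand side is
`n^{1/a - 1/2}` and the hypothesis reads `n^{1/a - 1/2} ≤ C n^{t_2}` for every `n`,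
which forces `1/a - 1/2 ≤ t_2`.
-/

open Filter

theorem lpNormFin_fin_one {p : ℝ≥0∞} (hp : p ≠ 0) {f : Fin 1 → ℝ} (hf : 0 ≤ f 0) :
    lpNormFin p f = f 0 := by
  unfold lpNormFin
  split_ifs with htop
  · exact ciSup_unique
  · rw [Fin.sum_univ_one, ← Real.rpow_mul hf, mul_one_div_cancel, Real.rpow_one]
    exact (ENNReal.toReal_pos hp htop).ne'

section RankOne

variable {𝕂 E F : Type*} [RCLike 𝕂] [NormedAddCommGroup E] [InnerProductSpace 𝕂 E]
  [NormedAddCommGroup F] [InnerProductSpace 𝕂 F]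

variable (𝕂) in
noncomputable def rankOneForm (u : E) (v : F) : E →L[𝕂] F →L[𝕂] 𝕂 :=
  (innerSL 𝕂 u).smulRight (innerSL 𝕂 v)

theorem rankOneForm_apply (u x : E) (v y : F) :
    rankOneForm 𝕂 u v x y = inner 𝕂 u x * inner 𝕂 v y := rfl

theorem norm_rankOneForm (u : E) (v : F) : ‖rankOneForm 𝕂 u v‖ = ‖u‖ * ‖v‖ := by
  rw [rankOneForm, ContinuousLinearMap.norm_smulRight_apply, innerSL_apply_norm,
    innerSL_apply_norm]

end RankOne

section Euclidean

variable {𝕂 : Type*} [RCLike 𝕂]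

theorem norm_rankOneForm_single_single {m n : ℕ} (u : EuclideanSpace 𝕂 (Fin m))
    (v : EuclideanSpace 𝕂 (Fin n)) (i : Fin m) (j : Fin n) :
    ‖rankOneForm 𝕂 u v (EuclideanSpace.single i 1) (EuclideanSpace.single j 1)‖ =
      ‖u i‖ * ‖v j‖ := by
  simp [rankOneForm_apply, EuclideanSpace.inner_single_right]

variable (𝕂) in
noncomputable def flatUnitVector (n : ℕ) : EuclideanSpace 𝕂 (Fin n) :=
  WithLp.toLp 2 fun _ => (((√n)⁻¹ : ℝ) : 𝕂)

theorem norm_flatUnitVector_apply {n : ℕ} (j : Fin n) :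
    ‖flatUnitVector 𝕂 n j‖ = (√n)⁻¹ := by
  simp [flatUnitVector]

theorem norm_flatUnitVector {n : ℕ} (hn : n ≠ 0) : ‖flatUnitVector 𝕂 n‖ = 1 := by
  rw [EuclideanSpace.norm_eq]
  simp only [norm_flatUnitVector_apply, inv_pow, Finset.sum_const, Finset.card_univ,
    Fintype.card_fin, nsmul_eq_mul]
  rw [Real.sq_sqrt (Nat.cast_nonneg n), mul_inv_cancel₀ (by exact_mod_cast hn), Real.sqrt_one]

theorem lpNorm_flatUnitVector {n : ℕ} (hn : n ≠ 0) {a : ℝ} (ha : a ≠ 0) :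
    (∑ j, ‖flatUnitVector 𝕂 n j‖ ^ a) ^ (1 / a) = (n : ℝ) ^ (1 / a - 1 / 2) := by
  have hn₀ : (0 : ℝ) < n := by positivity
  simp only [norm_flatUnitVector_apply, Finset.sum_const, Finset.card_univ, Fintype.card_fin,
    nsmul_eq_mul]
  rw [Real.sqrt_eq_rpow, ← Real.rpow_neg hn₀.le, ← Real.rpow_mul hn₀.le,
    mul_comm, ← Real.rpow_add_one hn₀.ne', ← Real.rpow_mul hn₀.le]
  congr 1
  field_simp
  ring

end Euclidean

theorem le_of_forall_natCast_rpow_le_mul_rpow {s t C : ℝ}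
    (h : ∀ n : ℕ, 0 < n → (n : ℝ) ^ s ≤ C * (n : ℝ) ^ t) : s ≤ t := by
  by_contra! hts
  have hlim : Tendsto (fun n : ℕ => (n : ℝ) ^ (s - t)) atTop atTop :=
    (tendsto_rpow_atTop (sub_pos.mpr hts)).comp tendsto_natCast_atTop_atTop
  obtain ⟨n, hCn, hn⟩ := ((hlim.eventually_gt_atTop C).and (eventually_gt_atTop 0)).exists
  have hpos : (0 : ℝ) < (n : ℝ) ^ t := by positivity
  have hle := h n hn
  rw [Real.rpow_sub (by positivity), lt_div_iff₀ hpos] at hCn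
  linarith

theorem bilinear_optimal_t2_general (𝕂 : Type*) [RCLike 𝕂] (a : ℝ) (ha : 0 < a)
    (b : ℝ≥0∞) (hb : 0 < b) (t1 t2 : ℝ) (C : ℝ)
    (h : ∀ n1 n2 : ℕ, 0 < n1 → 0 < n2 →
      ∀ U : EuclideanSpace 𝕂 (Fin n1) →L[𝕂] EuclideanSpace 𝕂 (Fin n2) →L[𝕂] 𝕂,
        lpNormFin b (fun i : Fin n1 =>
            (∑ j : Fin n2,
              ‖U (EuclideanSpace.single i 1) (EuclideanSpace.single j 1)‖ ^ a) ^ (1 / a))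
          ≤ C * (n1 : ℝ) ^ t1 * (n2 : ℝ) ^ t2 * ‖U‖) :
    1 / a - 1 / 2 ≤ t2 := by
  refine le_of_forall_natCast_rpow_le_mul_rpow (C := C) fun n hn => ?_
  set U := rankOneForm 𝕂 (EuclideanSpace.single (0 : Fin 1) (1 : 𝕂)) (flatUnitVector 𝕂 n)
  have hentry (i : Fin 1) (j : Fin n) : ‖U (EuclideanSpace.single i 1)
      (EuclideanSpace.single j 1)‖ = ‖flatUnitVector 𝕂 n j‖ := by
    simp [U, norm_rankOneForm_single_single, Subsingleton.elim i 0]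
  have hU : ‖U‖ = 1 := by
    rw [norm_rankOneForm, PiLp.norm_single, norm_one, norm_flatUnitVector hn.ne', one_mul]
  have key := h 1 n one_pos hn U
  simp only [hentry, lpNorm_flatUnitVector hn.ne' ha.ne', hU, Nat.cast_one, Real.one_rpow,
    mul_one] at key
  rwa [lpNormFin_fin_one hb.ne' (by positivity)] at key

/-- **Optimality of the exponent `t_2 = 1/a − 1/2`.**
Let `a ∈ (0,∞)`, `b ∈ (0,∞]`, `t_1, t_2 ≥ 0`, `C > 0`.  If
`( Σ_{i=1}^{n_1} ( Σ_{j=1}^{n_2} |U(e_i,e_j)|^a )^{b/a} )^{1/b} ≤ C n_1^{t_1} n_2^{t_2} ‖U‖`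
(outer sum a supremum when `b = ∞`) for all `n_1, n_2` and all bilinear forms
`U : ℓ_2^{n_1} × ℓ_2^{n_2} → 𝕂`, then `t_2 ≥ 1/a − 1/2`. -/
theorem bilinear_optimal_t2 (𝕂 : Type*) [RCLike 𝕂] (a : ℝ) (ha : 0 < a)
    (b : ℝ≥0∞) (hb : 0 < b) (t1 t2 : ℝ) (ht1 : 0 ≤ t1) (ht2 : 0 ≤ t2) (C : ℝ) (hC : 0 < C)
    (h : ∀ n1 n2 : ℕ, 0 < n1 → 0 < n2 →
      ∀ U : EuclideanSpace 𝕂 (Fin n1) →L[𝕂] EuclideanSpace 𝕂 (Fin n2) →L[𝕂] 𝕂,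
        lpNormFin b (fun i : Fin n1 =>
            (∑ j : Fin n2,
              ‖U (EuclideanSpace.single i 1) (EuclideanSpace.single j 1)‖ ^ a) ^ (1 / a))
          ≤ C * (n1 : ℝ) ^ t1 * (n2 : ℝ) ^ t2 * ‖U‖) :
    1 / a - 1 / 2 ≤ t2 :=
  bilinear_optimal_t2_general 𝕂 a ha b hb t1 t2 C h
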